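/- For every 1-VASS (Q,T) and states q₀, q° ∈ Q, the set boxreach((Q,T), q₀→q°) = {x° ∈ ℕ : (x°,q°) is box-reachable from (0,q₀)} is semilinear, i.e., a finite union of linear subsets of ℕ. -/

import Mathlib

/-- `IsPathFrom T q l q'`: the list of transitions `l` forms a path of the 1-VASS
with transition set `T` starting at state `q` and ending at state `q'`. -/
def IsPathFrom {Q : Type*} (T : Finset (Q × ℤ × Q)) : Q → List (Q × ℤ × Q) → Q → Prop
  | q, [], q' => q = q'
  | q, t :: ts, q' => t ∈ T ∧ t.1 = q ∧ IsPathFrom T t.2.2 ts q'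

/-- The effect of a list of transitions: the sum of the counter updates. -/
def effL {Q : Type*} (l : List (Q × ℤ × Q)) : ℤ :=
  (l.map fun t => t.2.1).sum

/-- `(x°, q°)` is box-reachable from `(0, q₀)`: there is an ℕ-path from `(0,q₀)`
to `(x°,q°)` all of whose prefix sums lie in `[0, x°]`. -/
def BoxReachConfig {Q : Type*} (T : Finset (Q × ℤ × Q)) (q₀ : Q) (x : ℤ) (qf : Q) : Prop :=
  ∃ l : List (Q × ℤ × Q), IsPathFrom T q₀ l qf ∧ effL l = x ∧
    ∀ j : ℕ, 0 ≤ effL (l.take j) ∧ effL (l.take j) ≤ x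

/-- A linear subset of `ℕ`: `{b + λ₁p₁ + ⋯ + λ_m p_m : λᵢ ∈ ℕ}`. -/
def IsLinearSetN (S : Set ℕ) : Prop :=
  ∃ (b : ℕ) (m : ℕ) (p : Fin m → ℕ),
    S = {x | ∃ lam : Fin m → ℕ, x = b + ∑ i, lam i * p i}

/-- A semilinear subset of `ℕ`: a finite union of linear sets. -/
def IsSemilinearN (S : Set ℕ) : Prop :=
  ∃ (n : ℕ) (L : Fin n → Set ℕ), (∀ i, IsLinearSetN (L i)) ∧ S = ⋃ i, L i

/-! Let `M` exceed every absolute counter update. A box path to `x ≥ (|Q|+1)M` first crosses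
the levels `M, 2M, …, (|Q|+1)M` at increasing times, overshooting each by less than `M`, and is in
the same state at two of these times. The cycle in between has effect `e ∈ [1, (|Q|+1)M]`, and
repeating it `k` times gives a box path to `x + k e`. Above `(|Q|+1)M` the set is therefore a union
of arithmetic progressions with finitely many periods, hence semilinear. -/

theorem isSemilinearN_iff_exists_finset {S : Set ℕ} :
    IsSemilinearN S ↔ ∃ F : Finset (Set ℕ), (∀ L ∈ F, IsLinearSetN L) ∧ S = ⋃₀ ↑F := by
  classical
  constructor
  · rintro ⟨n, L, hL, rfl⟩
    refine ⟨Finset.univ.image L, by simpa using hL, ?_⟩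
    simp
  · rintro ⟨F, hF, rfl⟩
    refine ⟨F.card, fun i => F.equivFin.symm i, fun i => hF _ (F.equivFin.symm i).2, ?_⟩
    ext x
    simp only [Set.mem_sUnion, Finset.mem_coe, Set.mem_iUnion]
    constructor
    · rintro ⟨L, hL, hx⟩
      exact ⟨F.equivFin ⟨L, hL⟩, by simpa using hx⟩
    · rintro ⟨i, hx⟩
      exact ⟨_, (F.equivFin.symm i).2, hx⟩

theorem IsLinearSetN.isSemilinearN {S : Set ℕ} (h : IsLinearSetN S) : IsSemilinearN S :=
  ⟨1, fun _ => S, fun _ => h, (Set.iUnion_const S).symm⟩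

theorem isSemilinearN_empty : IsSemilinearN ∅ :=
  ⟨0, Fin.elim0, fun i => i.elim0, by simp⟩

theorem isLinearSetN_singleton (b : ℕ) : IsLinearSetN {b} :=
  ⟨b, 0, Fin.elim0, by simp⟩

theorem isLinearSetN_range_add_mul (b p : ℕ) : IsLinearSetN (Set.range fun k => b + k * p) :=
  ⟨b, 1, fun _ => p, by
    ext x
    constructor
    · rintro ⟨k, rfl⟩
      exact ⟨fun _ => k, by simp⟩
    · rintro ⟨lam, rfl⟩
      exact ⟨lam 0, by simp⟩⟩

theorem IsSemilinearN.union {S S' : Set ℕ} (h : IsSemilinearN S) (h' : IsSemilinearN S') :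
    IsSemilinearN (S ∪ S') := by
  classical
  obtain ⟨F, hF, rfl⟩ := isSemilinearN_iff_exists_finset.mp h
  obtain ⟨F', hF', rfl⟩ := isSemilinearN_iff_exists_finset.mp h'
  refine isSemilinearN_iff_exists_finset.mpr ⟨F ∪ F', ?_, by simp [Set.sUnion_union]⟩
  simpa [or_imp, forall_and] using ⟨hF, hF'⟩

theorem isSemilinearN_biUnion {ι : Type*} [DecidableEq ι] (s : Finset ι) {f : ι → Set ℕ}
    (hf : ∀ i ∈ s, IsSemilinearN (f i)) : IsSemilinearN (⋃ i ∈ s, f i) := by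
  induction s using Finset.induction_on with
  | empty => simpa using isSemilinearN_empty
  | insert i s _ ih =>
    rw [Finset.set_biUnion_insert]
    exact (hf i (s.mem_insert_self i)).union (ih fun j hj => hf j (Finset.mem_insert_of_mem hj))

theorem Set.Finite.isSemilinearN {S : Set ℕ} (hS : S.Finite) : IsSemilinearN S := by
  rw [← Set.biUnion_of_singleton S, ← hS.coe_toFinset]
  exact isSemilinearN_biUnion _ fun b _ => (isLinearSetN_singleton b).isSemilinearN

theorem isSemilinearN_biUnion_range_add_mul_of_modEq (P : Set ℕ) (e : ℕ)
    (hP : ∀ y ∈ P, ∀ z ∈ P, y ≡ z [MOD e]) :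
    IsSemilinearN (⋃ y ∈ P, Set.range fun k => y + k * e) := by
  rcases P.eq_empty_or_nonempty with rfl | hne
  · simpa using isSemilinearN_empty
  suffices (⋃ y ∈ P, Set.range fun k => y + k * e) = Set.range fun k => sInf P + k * e by
    rw [this]
    exact (isLinearSetN_range_add_mul _ _).isSemilinearN
  have hmin : sInf P ∈ P := Nat.sInf_mem hne
  apply subset_antisymm
  · simp only [Set.iUnion_subset_iff]
    rintro y hy _ ⟨k, rfl⟩
    have hle : sInf P ≤ y := Nat.sInf_le hy
    have hdvd : e ∣ y - sInf P := (Nat.modEq_iff_dvd' hle).mp (hP _ hmin y hy)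
    refine ⟨(y - sInf P) / e + k, ?_⟩
    simp only [add_mul, Nat.div_mul_cancel hdvd]
    omega
  · exact Set.subset_biUnion_of_mem (u := fun y => Set.range fun k => y + k * e) hmin

theorem isSemilinearN_biUnion_range_add_mul (P : Set ℕ) {e : ℕ} (he : 0 < e) :
    IsSemilinearN (⋃ y ∈ P, Set.range fun k => y + k * e) := by
  have hsplit : (⋃ y ∈ P, Set.range fun k => y + k * e) =
      ⋃ r ∈ Finset.range e, ⋃ y ∈ {y ∈ P | y % e = r}, Set.range fun k => y + k * e := by
    ext x
    simp only [Set.mem_iUnion, Finset.mem_range, Set.mem_ofPred_eq, exists_prop]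
    constructor
    · rintro ⟨y, hy, hx⟩
      exact ⟨y % e, Nat.mod_lt y he, y, ⟨hy, rfl⟩, hx⟩
    · rintro ⟨r, -, y, ⟨hy, -⟩, hx⟩
      exact ⟨y, hy, hx⟩
  rw [hsplit]
  refine isSemilinearN_biUnion _ fun r _ => isSemilinearN_biUnion_range_add_mul_of_modEq _ _ ?_
  rintro y ⟨-, hy⟩ z ⟨-, hz⟩
  exact hy.trans hz.symm

theorem isSemilinearN_of_pumpable (S : Set ℕ) (E : ℕ)
    (hpump : ∀ x ∈ S, E ≤ x → ∃ e ∈ Finset.Icc 1 E, ∀ k, x + k * e ∈ S) :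
    IsSemilinearN S := by
  have hsplit : S = {x ∈ S | x < E} ∪
      ⋃ e ∈ Finset.Icc 1 E, ⋃ y ∈ {y ∈ S | ∀ k, y + k * e ∈ S}, Set.range fun k => y + k * e := by
    apply subset_antisymm
    · intro x hx
      rcases lt_or_ge x E with hxE | hxE
      · exact Or.inl ⟨hx, hxE⟩
      · obtain ⟨e, he, hxe⟩ := hpump x hx hxE
        exact Or.inr (Set.mem_biUnion he (Set.mem_biUnion (x := x) ⟨hx, hxe⟩ ⟨0, by simp⟩))
    · simp only [Set.union_subset_iff, Set.iUnion_subset_iff]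
      exact ⟨fun x hx => hx.1, fun e _ y hy _ ⟨k, hk⟩ => hk ▸ hy.2 k⟩
  rw [hsplit]
  refine IsSemilinearN.union ((Set.finite_lt_nat E).subset fun x hx => hx.2).isSemilinearN
    (isSemilinearN_biUnion _ fun e he => isSemilinearN_biUnion_range_add_mul _ ?_)
  exact (Finset.mem_Icc.mp he).1

section Paths

variable {Q : Type*} {T : Finset (Q × ℤ × Q)}

theorem isPathFrom_append_iff {l₁ l₂ : List (Q × ℤ × Q)} {q q'' : Q} :
    IsPathFrom T q (l₁ ++ l₂) q'' ↔ ∃ q', IsPathFrom T q l₁ q' ∧ IsPathFrom T q' l₂ q'' := by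
  induction l₁ generalizing q with
  | nil => exact ⟨fun h => ⟨q, rfl, h⟩, fun ⟨_, rfl, h⟩ => h⟩
  | cons t ts ih => simp only [List.cons_append, IsPathFrom, ih, and_assoc, exists_and_left]

theorem IsPathFrom.unique {l : List (Q × ℤ × Q)} {q q₁ q₂ : Q}
    (h₁ : IsPathFrom T q l q₁) (h₂ : IsPathFrom T q l q₂) : q₁ = q₂ := by
  induction l generalizing q with
  | nil => exact (h₁ : q = q₁).symm.trans h₂
  | cons t ts ih => exact ih h₁.2.2 h₂.2.2

theorem IsPathFrom.exists_split {l : List (Q × ℤ × Q)} {q q' : Q} (h : IsPathFrom T q l q')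
    (j : ℕ) : ∃ p, IsPathFrom T q (l.take j) p ∧ IsPathFrom T p (l.drop j) q' :=
  isPathFrom_append_iff.mp ((List.take_append_drop j l).symm ▸ h)

theorem IsPathFrom.mem {l : List (Q × ℤ × Q)} {q q' : Q} (h : IsPathFrom T q l q') :
    ∀ t ∈ l, t ∈ T := by
  induction l generalizing q with
  | nil => simp
  | cons t ts ih =>
    rintro t' (_ | ⟨_, ht'⟩)
    exacts [h.1, ih h.2.2 t' ht']

end Paths

@[simp]
theorem effL_append {Q : Type*} (l₁ l₂ : List (Q × ℤ × Q)) :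
    effL (l₁ ++ l₂) = effL l₁ + effL l₂ := by
  simp [effL]

theorem effL_take_succ_le {Q : Type*} (T : Finset (Q × ℤ × Q)) {l : List (Q × ℤ × Q)}
    (hl : ∀ t ∈ l, t ∈ T) (j : ℕ) :
    effL (l.take (j + 1)) ≤ effL (l.take j) + T.sup fun t => t.2.1.natAbs := by
  rcases lt_or_ge j l.length with hj | hj
  · have hle : (l[j].2.1.natAbs : ℤ) ≤ T.sup fun t => t.2.1.natAbs := by
      exact_mod_cast Finset.le_sup (f := fun t : Q × ℤ × Q => t.2.1.natAbs) (hl _ (l.getElem_mem hj))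
    rw [List.take_add_one, List.getElem?_eq_getElem hj, Option.toList_some, effL_append]
    have hsingle : effL [l[j]] = l[j].2.1 := by simp [effL]
    linarith [Int.le_natAbs (a := l[j].2.1)]
  · rw [List.take_of_length_le (by omega), List.take_of_length_le hj]
    omega

def PrefixEffectsIn {Q : Type*} (l : List (Q × ℤ × Q)) (x : ℤ) : Prop :=
  ∀ j : ℕ, 0 ≤ effL (l.take j) ∧ effL (l.take j) ≤ x

/-- Past the inserted copy of `C`, every prefix of `A ++ C ++ C ++ B` is a prefix of
`A ++ C ++ B` shifted by `effL C`; before it, the two lists agree. -/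
theorem PrefixEffectsIn.duplicate {Q : Type*} {A C B : List (Q × ℤ × Q)} {x : ℤ}
    (h : PrefixEffectsIn (A ++ C ++ B) x) (hC : 0 ≤ effL C) :
    PrefixEffectsIn (A ++ C ++ C ++ B) (x + effL C) := by
  intro j
  rcases le_or_gt j (A ++ C).length with hj | hj
  · have htake : (A ++ C ++ C ++ B).take j = (A ++ C ++ B).take j := by
      rw [List.append_assoc _ C B, List.take_append_of_le_length hj,
        List.take_append_of_le_length hj]
    rw [htake]
    exact ⟨(h j).1, by linarith [(h j).2]⟩
  · obtain ⟨i, rfl⟩ : ∃ i, j = (A ++ C).length + i := ⟨j - (A ++ C).length, by omega⟩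
    have hshift : effL ((A ++ C ++ C ++ B).take ((A ++ C).length + i)) =
        effL C + effL ((A ++ C ++ B).take (A.length + i)) := by
      rw [List.append_assoc (A ++ C), List.take_length_add_append, List.append_assoc A C B,
        List.take_length_add_append]
      simp only [effL_append]
      ring
    have hlen : (A ++ C).length + i - C.length = A.length + i := by simp; omega
    rw [hshift]
    have hi := hlen ▸ h ((A ++ C).length + i - C.length)
    exact ⟨by linarith [hi.1], by linarith [hi.2]⟩

theorem boxReachConfig_add_mul_of_cycle {Q : Type*} {T : Finset (Q × ℤ × Q)} {q₀ p qf : Q}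
    {A C B : List (Q × ℤ × Q)} {x : ℤ} (hA : IsPathFrom T q₀ A p) (hC : IsPathFrom T p C p)
    (hB : IsPathFrom T p B qf) (heff : effL (A ++ C ++ B) = x)
    (hbox : PrefixEffectsIn (A ++ C ++ B) x) (hCnonneg : 0 ≤ effL C) (k : ℕ) :
    BoxReachConfig T q₀ (x + k * effL C) qf := by
  have hAC : IsPathFrom T q₀ (A ++ C) p := isPathFrom_append_iff.mpr ⟨p, hA, hC⟩
  induction k generalizing A x with
  | zero =>
    rw [Nat.cast_zero, zero_mul, add_zero]
    exact ⟨A ++ C ++ B, isPathFrom_append_iff.mpr ⟨p, hAC, hB⟩, heff, hbox⟩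
  | succ k ih =>
    rw [show x + ((k + 1 : ℕ) : ℤ) * effL C = x + effL C + k * effL C by push_cast; ring]
    exact ih hAC (by simp only [effL_append] at heff ⊢; linarith) (hbox.duplicate hCnonneg)
      (isPathFrom_append_iff.mpr ⟨p, hAC, hC⟩)

theorem exists_first_le_of_step_lt (s : ℕ → ℤ) {M v : ℤ} (hstep : ∀ j, s (j + 1) < s j + M)
    (h0 : s 0 < v) {N : ℕ} (hN : v ≤ s N) :
    ∃ t, v ≤ s t ∧ s t < v + M ∧ ∀ j < t, s j < v := by
  classical
  have hex : ∃ t, v ≤ s t := ⟨N, hN⟩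
  obtain ⟨u, hu⟩ : ∃ u, Nat.find hex = u + 1 :=
    Nat.exists_eq_add_one_of_ne_zero fun h => (Nat.find_spec hex).not_gt (h ▸ h0)
  have hmin : ∀ j < Nat.find hex, s j < v := fun j hj => not_le.mp (Nat.find_min hex hj)
  refine ⟨Nat.find hex, Nat.find_spec hex, ?_, hmin⟩
  rw [hu]
  linarith [hstep u, hmin u (by omega)]

theorem exists_lt_map_eq_of_step_lt {Q : Type*} [Fintype Q] (s : ℕ → ℤ) (f : ℕ → Q) {M : ℤ}
    (hM : 0 < M) (h0 : s 0 = 0) (hstep : ∀ j, s (j + 1) < s j + M) {N : ℕ}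
    (hN : (Fintype.card Q + 1) * M ≤ s N) :
    ∃ a b, a < b ∧ f a = f b ∧ 0 < s b - s a ∧ s b - s a ≤ (Fintype.card Q + 1) * M := by
  set n := Fintype.card Q
  have hlevel : ∀ i : Fin (n + 1), ∃ t, ((i : ℤ) + 1) * M ≤ s t ∧
      s t < ((i : ℤ) + 1) * M + M ∧ ∀ j < t, s j < ((i : ℤ) + 1) * M := by
    intro i
    have hi : (i : ℤ) + 1 ≤ n + 1 := by exact_mod_cast Nat.succ_le_succ (Nat.lt_succ_iff.mp i.isLt)
    refine exists_first_le_of_step_lt s hstep ?_ (le_trans ?_ hN)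
    · rw [h0]; positivity
    · exact mul_le_mul_of_nonneg_right hi hM.le
  choose t hge hlt hfirst using hlevel
  have hcross : ∀ i i' : Fin (n + 1), i < i' →
      t i < t i' ∧ 0 < s (t i') - s (t i) ∧ s (t i') - s (t i) ≤ (n + 1) * M := by
    intro i i' hii'
    have hii' : (i : ℤ) + 1 ≤ i' := by exact_mod_cast hii'
    have hi' : (i' : ℤ) ≤ n := by exact_mod_cast Nat.lt_succ_iff.mp i'.isLt
    have hgap : ((i : ℤ) + 1) * M + M ≤ ((i' : ℤ) + 1) * M := by nlinarith
    have hspan : ((i' : ℤ) + 1) * M + M ≤ (n + 1) * M + ((i : ℤ) + 1) * M := by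
      nlinarith [(i : ℕ).cast_nonneg (α := ℤ)]
    refine ⟨?_, by linarith [hlt i, hge i'], by linarith [hge i, hlt i']⟩
    by_contra! hle
    rcases hle.lt_or_eq with hlt' | heq
    · linarith [hfirst i (t i') hlt', hge i']
    · linarith [hlt i, heq ▸ hge i']
  have hcard : Fintype.card Q < Fintype.card (Fin (n + 1)) := by simp [n]
  obtain ⟨i, i', hne, hfeq⟩ := Fintype.exists_ne_map_eq_of_card_lt (f ∘ t) hcard
  rcases hne.lt_or_gt with hii' | hi'i
  · obtain ⟨hlt, hpos, hle⟩ := hcross i i' hii'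
    exact ⟨t i, t i', hlt, hfeq, hpos, hle⟩
  · obtain ⟨hlt, hpos, hle⟩ := hcross i' i hi'i
    exact ⟨t i', t i, hlt, hfeq.symm, hpos, hle⟩

theorem BoxReachConfig.exists_pump {Q : Type*} [Fintype Q] {T : Finset (Q × ℤ × Q)} {q₀ qf : Q}
    {x : ℕ} (h : BoxReachConfig T q₀ x qf)
    (hx : (Fintype.card Q + 1) * (T.sup (fun t => t.2.1.natAbs) + 1) ≤ x) :
    ∃ e ∈ Finset.Icc 1 ((Fintype.card Q + 1) * (T.sup (fun t => t.2.1.natAbs) + 1)),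
      ∀ k : ℕ, BoxReachConfig T q₀ ((x + k * e : ℕ) : ℤ) qf := by
  obtain ⟨l, hl, heff, hbox⟩ := h
  choose st hst₁ hst₂ using hl.exists_split
  obtain ⟨a, b, hab, hst, hpos, hle⟩ := exists_lt_map_eq_of_step_lt (fun j => effL (l.take j)) st
    (M := (T.sup fun t => t.2.1.natAbs : ℕ) + 1) (by positivity) (by simp [effL])
    (fun j => by linarith [effL_take_succ_le T hl.mem j]) (N := l.length)
    (by rw [List.take_length, heff]; exact_mod_cast hx)
  set C := (l.drop a).take (b - a)
  have htake : l.take b = l.take a ++ C := by rw [← List.take_add, Nat.add_sub_cancel' hab.le]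
  have hsplit : l = l.take a ++ C ++ l.drop b := by rw [← htake, List.take_append_drop]
  have hcycle : IsPathFrom T (st b) C (st b) := by
    obtain ⟨r, hr, hC⟩ := isPathFrom_append_iff.mp (htake ▸ hst₁ b)
    rwa [hr.unique (hst₁ a), hst] at hC
  have heC : effL C = effL (l.take b) - effL (l.take a) := by
    rw [htake, effL_append]
    ring
  have hCle : effL C ≤ ((Fintype.card Q + 1) * (T.sup (fun t => t.2.1.natAbs) + 1) : ℕ) := by
    push_cast
    exact heC ▸ hle
  rw [hsplit] at heff hbox
  refine ⟨(effL C).toNat, Finset.mem_Icc.mpr ⟨by omega, by omega⟩, fun k => ?_⟩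
  have hpump := boxReachConfig_add_mul_of_cycle (hst ▸ hst₁ a) hcycle (hst₂ b) heff hbox
    (by omega) k
  rwa [← Int.toNat_of_nonneg (by omega : 0 ≤ effL C)] at hpump

/-- For every 1-VASS and states `q₀, q°`, the set of counter values `x°` such that
`(x°,q°)` is box-reachable from `(0,q₀)` is semilinear. -/
theorem boxReach_1VASS_semilinear {Q : Type*} [Fintype Q]
    (T : Finset (Q × ℤ × Q)) (q₀ qf : Q) :
    IsSemilinearN {x : ℕ | BoxReachConfig T q₀ (x : ℤ) qf} :=
  isSemilinearN_of_pumpable _ _ fun _ hx hlarge => BoxReachConfig.exists_pump hx hlarge
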